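/- For q ≥ 0 and n ≥ 2, the bound (1+q²)‖A‖_F²‖B‖_F² for ‖AB − qBA‖_F² with A normal is sharp: for A = diag(1, −q, 0, …, 0) and B the matrix with b₁₂ = 1 and all other entries zero, ‖AB − qBA‖_F² = (1+q²)‖A‖_F²‖B‖_F² holds whenever ‖A‖_F² = s₁(A)² + s₂(A)², i.e. equality ‖[A,B]_q‖_F² = (1+q²)(1+q²)·1 is attained. -/

import Mathlib

open Matrix
open scoped BigOperators Matrix

noncomputable def frobSq {n : ℕ} (M : Matrix (Fin n) (Fin n) ℂ) : ℝ :=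
  ∑ i, ∑ j, ‖M i j‖ ^ 2

/-! A diagonal matrix `diagonal d` sends the matrix unit `single i j c` under `[·, ·]_q` to
`single i j ((d i - q * d j) * c)`. For `d = (1, -q, 0, …)` and `(i, j) = (0, 1)` this scalar is
`1 + q ^ 2`, so both sides of the bound equal `(1 + q ^ 2) ^ 2`. -/

namespace Matrix

variable {m R : Type*} [DecidableEq m] [Fintype m]

theorem diagonal_mul_single [NonUnitalNonAssocSemiring R] (d : m → R) (i j : m) (c : R) :
    diagonal d * single i j c = single i j (d i * c) := by
  ext k l
  simp only [diagonal_mul, single_apply]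
  split_ifs with h
  · rw [h.1]
  · exact mul_zero _

theorem single_mul_diagonal [NonUnitalNonAssocSemiring R] (d : m → R) (i j : m) (c : R) :
    single i j c * diagonal d = single i j (c * d j) := by
  ext k l
  simp only [mul_diagonal, single_apply]
  split_ifs with h
  · rw [h.2]
  · exact zero_mul _

theorem diagonal_mul_single_sub_smul_single_mul_diagonal [CommRing R] (d : m → R) (q : R)
    (i j : m) (c : R) :
    diagonal d * single i j c - q • (single i j c * diagonal d) =
      single i j ((d i - q * d j) * c) := by
  ext k l
  simp only [diagonal_mul_single, single_mul_diagonal, smul_single, Matrix.sub_apply,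
    single_apply]
  split_ifs
  · simp only [smul_eq_mul]; ring
  · simp

end Matrix

theorem frobSq_single {n : ℕ} (i j : Fin n) (c : ℂ) : frobSq (single i j c) = ‖c‖ ^ 2 := by
  unfold frobSq
  rw [Finset.sum_eq_single i (fun k _ hk => by simp [single_apply_of_row_ne hk.symm]) (by simp),
    Finset.sum_eq_single j (fun l _ hl => by simp [single_apply_of_col_ne _ _ hl.symm]) (by simp)]
  simp

theorem frobSq_diagonal {n : ℕ} (d : Fin n → ℂ) : frobSq (diagonal d) = ∑ i, ‖d i‖ ^ 2 := by
  unfold frobSq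
  refine Finset.sum_congr rfl fun i _ => ?_
  rw [Finset.sum_eq_single i (fun j _ hj => by simp [diagonal_apply_ne _ hj.symm]) (by simp)]
  simp

theorem stmt_5 {n : ℕ} (hn : 2 ≤ n) (q : ℝ)
    (A B : Matrix (Fin n) (Fin n) ℂ)
    (hA : A = Matrix.diagonal fun i : Fin n =>
      if (i : ℕ) = 0 then 1 else if (i : ℕ) = 1 then (-q : ℂ) else 0)
    (hB : B = Matrix.single (⟨0, by omega⟩ : Fin n) (⟨1, by omega⟩ : Fin n) 1) :
    frobSq (A * B - (q : ℂ) • (B * A)) = (1 + q ^ 2) * frobSq A * frobSq B ∧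
    frobSq A = 1 + q ^ 2 ∧ frobSq B = 1 := by
  have hB_frob : frobSq B = 1 := by simp [hB, frobSq_single]
  have hA_frob : frobSq A = 1 + q ^ 2 := by
    rw [hA, frobSq_diagonal, Finset.sum_eq_add (⟨0, by omega⟩ : Fin n) ⟨1, by omega⟩ (by simp)
      (fun k _ hk => by simp only [ne_eq, Fin.ext_iff] at hk; simp [hk]) (by simp) (by simp)]
    simp
  have h_comm : A * B - (q : ℂ) • (B * A) =
      single ⟨0, by omega⟩ ⟨1, by omega⟩ ((1 + q ^ 2 : ℝ) : ℂ) := by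
    rw [hA, hB, diagonal_mul_single_sub_smul_single_mul_diagonal]
    congr 1
    push_cast
    ring
  refine ⟨?_, hA_frob, hB_frob⟩
  rw [h_comm, frobSq_single, hA_frob, hB_frob, Complex.norm_real, Real.norm_eq_abs, sq_abs]
  ring
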